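/- Let G: P2 → (−∞, +∞] be lower semi-continuous with Dom(G) ⊂ P2^r, let γ > 0, let p ∈ P2^r, and define F(ρ) = G(ρ) + (1/(2γ)) W2(p, ρ)². Let ρ ∈ P2^r and let T_ρ^p denote the optimal transport map from ρ to p. If ξ is a strong Fréchet subdifferential of F at ρ, then ξ + (T_ρ^p − Id)/γ is a strong Fréchet subdifferential of G at ρ. -/

import Mathlib

open MeasureTheory ENNReal Real
open scoped RealInnerProductSpace

noncomputable section

abbrev Ed (d : ℕ) : Type := EuclideanSpace ℝ (Fin d)

variable {d : ℕ}

/-- Finite second moment. -/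
def HasFiniteSecondMoment (μ : Measure (Ed d)) : Prop :=
  ∫⁻ x, (‖x‖₊ : ℝ≥0∞) ^ 2 ∂μ < ⊤

/-- `μ ∈ P₂`: probability measure with finite second moment. -/
def MemP2 (μ : Measure (Ed d)) : Prop :=
  IsProbabilityMeasure μ ∧ HasFiniteSecondMoment μ

/-- `μ ∈ P₂ʳ`: member of `P₂` absolutely continuous w.r.t. Lebesgue. -/
def MemP2r (μ : Measure (Ed d)) : Prop :=
  MemP2 μ ∧ μ ≪ (volume : Measure (Ed d))

/-- Second moment `M₂`. -/
def secondMoment (μ : Measure (Ed d)) : ℝ := ∫ x, ‖x‖ ^ 2 ∂μ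

/-- couplings of μ and ν. -/
def IsCoupling (pl : Measure (Ed d × Ed d)) (μ ν : Measure (Ed d)) : Prop :=
  pl.map Prod.fst = μ ∧ pl.map Prod.snd = ν

/-- Squared Wasserstein-2 distance (in `ℝ≥0∞`). -/
def W2sq (μ ν : Measure (Ed d)) : ℝ≥0∞ :=
  ⨅ (pl : Measure (Ed d × Ed d)) (_ : IsCoupling pl μ ν),
    ∫⁻ z, (‖z.1 - z.2‖₊ : ℝ≥0∞) ^ 2 ∂pl

/-- Wasserstein-2 distance (real-valued). -/
def W2 (μ ν : Measure (Ed d)) : ℝ := Real.sqrt (W2sq μ ν).toReal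

/-- `T` is the optimal transport map from `μ` to `ν`. -/
def IsOTMap (μ ν : Measure (Ed d)) (T : Ed d → Ed d) : Prop :=
  Measurable T ∧ μ.map T = ν ∧
    (∫⁻ x, (‖x - T x‖₊ : ℝ≥0∞) ^ 2 ∂μ) = W2sq μ ν

/-- L²(μ) norm of a vector field. -/
def L2norm (μ : Measure (Ed d)) (v : Ed d → Ed d) : ℝ := Real.sqrt (∫ x, ‖v x‖ ^ 2 ∂μ)

/-- L²(μ) inner product of vector fields. -/
def L2inner (μ : Measure (Ed d)) (u v : Ed d → Ed d) : ℝ := ∫ x, ⟪u x, v x⟫ ∂μ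

/-- Strong Fréchet subdifferential of `φ` at `μ`. -/
def IsStrongSubdiff (φ : Measure (Ed d) → EReal) (μ : Measure (Ed d)) (ξ : Ed d → Ed d) : Prop :=
  MemLp ξ 2 μ ∧
  ∀ ε : ℝ, 0 < ε → ∃ δ : ℝ, 0 < δ ∧
    ∀ v : Ed d → Ed d, MemLp v 2 μ → L2norm μ v ≤ δ →
      φ (μ.map (fun x => x + v x)) ≥ φ μ + ((L2inner μ ξ v - ε * L2norm μ v : ℝ) : EReal)

/-- λ-convexity along generalized geodesics. -/
def ConvexAGG (φ : Measure (Ed d) → EReal) (lam : ℝ) : Prop :=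
  ∀ (ν μ₁ μ₂ : Measure (Ed d)), MemP2r ν → MemP2 μ₁ → MemP2 μ₂ →
    ∀ (T₁ T₂ : Ed d → Ed d), IsOTMap ν μ₁ T₁ → IsOTMap ν μ₂ T₂ →
      ∀ t : ℝ, 0 ≤ t → t ≤ 1 →
        φ (ν.map (fun x => (1 - t) • T₁ x + t • T₂ x)) ≤
          ((1 - t : ℝ) : EReal) * φ μ₁ + (t : EReal) * φ μ₂ -
            (((lam / 2) * t * (1 - t) * ∫ x, ‖T₁ x - T₂ x‖ ^ 2 ∂ν : ℝ) : EReal)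

-- Kullback–Leibler divergence, `+∞` if not absolutely continuous.
open Classical in
def KLdiv (μ ν : Measure (Ed d)) : ℝ≥0∞ :=
  if μ ≪ ν ∧ Integrable (llr μ ν) μ then ENNReal.ofReal (∫ x, llr μ ν x ∂μ) else ⊤

/-- Total variation distance. -/
def TVdist (μ ν : Measure (Ed d)) : ℝ :=
  ⨆ s : {s : Set (Ed d) // MeasurableSet s}, |(μ s.1).toReal - (ν s.1).toReal|

/-- Lower semicontinuity on probability measures with the weak topology. -/
def LscOnP2 (φ : Measure (Ed d) → EReal) : Prop :=
  LowerSemicontinuous (fun μ : ProbabilityMeasure (Ed d) => φ (μ : Measure (Ed d)))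

/-- The JKO objective `F(ρ) = G(ρ) + W₂²(μ, ρ)/(2γ)`. -/
def JKOfun (G : Measure (Ed d) → EReal) (γ : ℝ) (μ ρ : Measure (Ed d)) : EReal :=
  G ρ + ((ENNReal.ofReal (1 / (2 * γ)) * W2sq μ ρ : ℝ≥0∞) : EReal)

/-!
Write `u = Id - T_ρ^p`. Since `T_ρ^p` pushes `ρ` to `p`, the plan `(T_ρ^p, Id + v)_# ρ` couples `p`
with `(Id + v)_# ρ`, so
`W₂²(p, (Id + v)_# ρ) ≤ ‖u + v‖²_ρ = W₂²(p, ρ) + 2 ⟨u, v⟩_ρ + ‖v‖²_ρ`.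
Hence `W₂²(p, ·) / (2γ)` has the strong superdifferential `u / γ` at `ρ`, with a quadratic
remainder, and subtracting a superdifferential of the finite term `ψ` from a subdifferential of
`G + ψ` leaves a subdifferential of `G`.
-/

section L2

variable {α E : Type*} [MeasurableSpace α] {μ : Measure α}

lemma memLp_two_of_lintegral_nnnorm_sq_lt_top [NormedAddCommGroup E] {f : α → E}
    (hf : AEStronglyMeasurable f μ) (h : ∫⁻ x, (‖f x‖₊ : ℝ≥0∞) ^ 2 ∂μ < ⊤) : MemLp f 2 μ := by
  rw [memLp_two_iff_integrable_sq_norm hf]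
  refine ⟨hf.norm.pow 2, ?_⟩
  simpa [hasFiniteIntegral_def, enorm_pow, enorm_eq_nnnorm] using h

lemma MeasureTheory.MemLp.lintegral_nnnorm_sq_eq [NormedAddCommGroup E] {f : α → E}
    (hf : MemLp f 2 μ) :
    ∫⁻ x, (‖f x‖₊ : ℝ≥0∞) ^ 2 ∂μ = ENNReal.ofReal (∫ x, ‖f x‖ ^ 2 ∂μ) := by
  rw [ofReal_integral_eq_lintegral_ofReal ((memLp_two_iff_integrable_sq_norm hf.1).mp hf)
    (ae_of_all _ fun x => sq_nonneg _)]
  refine lintegral_congr fun x => ?_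
  rw [ENNReal.ofReal_pow (norm_nonneg _), ofReal_norm, enorm_eq_nnnorm]

variable [NormedAddCommGroup E] [InnerProductSpace ℝ E]

lemma MeasureTheory.MemLp.integrable_inner {f g : α → E} (hf : MemLp f 2 μ) (hg : MemLp g 2 μ) :
    Integrable (fun x => ⟪f x, g x⟫) μ :=
  (hf.norm.integrable_mul hg.norm).mono' (hf.1.inner hg.1)
    (ae_of_all _ fun x => abs_real_inner_le_norm (f x) (g x))

lemma integral_norm_add_sq {f g : α → E} (hf : MemLp f 2 μ) (hg : MemLp g 2 μ) :
    ∫ x, ‖f x + g x‖ ^ 2 ∂μ =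
      ∫ x, ‖f x‖ ^ 2 ∂μ + 2 * ∫ x, ⟪f x, g x⟫ ∂μ + ∫ x, ‖g x‖ ^ 2 ∂μ := by
  have hf2 := (memLp_two_iff_integrable_sq_norm hf.1).mp hf
  have hg2 := (memLp_two_iff_integrable_sq_norm hg.1).mp hg
  have hfg := (hf.integrable_inner hg).const_mul 2
  have h12 : Integrable (fun x => ‖f x‖ ^ 2 + 2 * ⟪f x, g x⟫) μ := hf2.add hfg
  simp_rw [norm_add_sq_real]
  rw [integral_add h12 hg2, integral_add hf2 hfg, integral_const_mul]

end L2

section L2Ed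

variable {μ : Measure (Ed d)}

lemma L2norm_sq (v : Ed d → Ed d) : L2norm μ v ^ 2 = ∫ x, ‖v x‖ ^ 2 ∂μ :=
  Real.sq_sqrt (integral_nonneg fun _ => sq_nonneg _)

lemma L2inner_smul_left (c : ℝ) (u v : Ed d → Ed d) :
    L2inner μ (fun x => c • u x) v = c * L2inner μ u v := by
  simp only [L2inner, real_inner_smul_left, integral_const_mul]

lemma L2inner_sub_left {u w v : Ed d → Ed d} (hu : MemLp u 2 μ) (hw : MemLp w 2 μ)
    (hv : MemLp v 2 μ) : L2inner μ (fun x => u x - w x) v = L2inner μ u v - L2inner μ w v := by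
  simp only [L2inner, inner_sub_left]
  exact integral_sub (hu.integrable_inner hv) (hw.integrable_inner hv)

end L2Ed

section Wasserstein

lemma measurable_nnnorm_sub_sq :
    Measurable fun z : Ed d × Ed d => (‖z.1 - z.2‖₊ : ℝ≥0∞) ^ 2 :=
  ((measurable_fst.sub measurable_snd).nnnorm.coe_nnreal_ennreal).pow_const 2

lemma W2sq_le_lintegral_of_isCoupling {μ ν : Measure (Ed d)} {κ : Measure (Ed d × Ed d)}
    (h : IsCoupling κ μ ν) : W2sq μ ν ≤ ∫⁻ z, (‖z.1 - z.2‖₊ : ℝ≥0∞) ^ 2 ∂κ :=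
  iInf₂_le κ h

lemma W2sq_comm (μ ν : Measure (Ed d)) : W2sq μ ν = W2sq ν μ := by
  suffices ∀ μ ν : Measure (Ed d), W2sq ν μ ≤ W2sq μ ν from le_antisymm (this _ _) (this _ _)
  intro μ ν
  refine le_iInf₂ fun κ hκ => ?_
  have hswap : IsCoupling (κ.map Prod.swap) ν μ := by
    constructor
    · rw [Measure.map_map measurable_fst measurable_swap]; exact hκ.2
    · rw [Measure.map_map measurable_snd measurable_swap]; exact hκ.1
  refine (W2sq_le_lintegral_of_isCoupling hswap).trans_eq ?_
  rw [lintegral_map measurable_nnnorm_sub_sq measurable_swap]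
  exact lintegral_congr fun z => by rw [Prod.fst_swap, Prod.snd_swap, ← neg_sub, nnnorm_neg]

lemma W2sq_map_le_lintegral {ρ : Measure (Ed d)} {T R : Ed d → Ed d}
    (hT : AEMeasurable T ρ) (hR : AEMeasurable R ρ) :
    W2sq (ρ.map T) (ρ.map R) ≤ ∫⁻ x, (‖T x - R x‖₊ : ℝ≥0∞) ^ 2 ∂ρ := by
  have hTR : AEMeasurable (fun x => (T x, R x)) ρ := hT.prodMk hR
  refine (W2sq_le_lintegral_of_isCoupling (κ := ρ.map fun x => (T x, R x)) ⟨?_, ?_⟩).trans_eq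
    (lintegral_map' measurable_nnnorm_sub_sq.aemeasurable hTR)
  · rw [AEMeasurable.map_map_of_aemeasurable measurable_fst.aemeasurable hTR]; rfl
  · rw [AEMeasurable.map_map_of_aemeasurable measurable_snd.aemeasurable hTR]; rfl

lemma HasFiniteSecondMoment.memLp_id {μ : Measure (Ed d)} (h : HasFiniteSecondMoment μ) :
    MemLp id 2 μ :=
  memLp_two_of_lintegral_nnnorm_sq_lt_top aestronglyMeasurable_id h

lemma IsOTMap.memLp_id_sub {ρ p : Measure (Ed d)} {T : Ed d → Ed d} (hT : IsOTMap ρ p T)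
    (hρ : HasFiniteSecondMoment ρ) (hp : HasFiniteSecondMoment p) :
    MemLp (fun x => x - T x) 2 ρ := by
  have hTp : MemLp T 2 ρ := by
    rw [← hT.2.1] at hp
    exact hp.memLp_id.comp_of_map hT.1.aemeasurable
  exact hρ.memLp_id.sub hTp

lemma IsOTMap.W2sq_eq {ρ p : Measure (Ed d)} {T : Ed d → Ed d} (hT : IsOTMap ρ p T)
    (hu : MemLp (fun x => x - T x) 2 ρ) :
    W2sq ρ p = ENNReal.ofReal (∫ x, ‖x - T x‖ ^ 2 ∂ρ) := by
  rw [← hT.2.2, hu.lintegral_nnnorm_sq_eq]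

lemma IsOTMap.W2sq_map_add_le {ρ p : Measure (Ed d)} {T v : Ed d → Ed d} (hT : IsOTMap ρ p T)
    (hv : AEMeasurable v ρ) :
    W2sq p (ρ.map fun x => x + v x) ≤ ∫⁻ x, (‖(x - T x) + v x‖₊ : ℝ≥0∞) ^ 2 ∂ρ := by
  conv_lhs => rw [← hT.2.1]
  refine (W2sq_map_le_lintegral hT.1.aemeasurable (aemeasurable_id.add hv)).trans_eq ?_
  refine lintegral_congr fun x => ?_
  rw [← nnnorm_neg, Pi.add_apply, id, neg_sub, sub_add_eq_add_sub]

end Wasserstein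

section Subdifferential

def IsStrongSuperdiff (ψ : Measure (Ed d) → EReal) (μ : Measure (Ed d)) (ζ : Ed d → Ed d) :
    Prop :=
  MemLp ζ 2 μ ∧
  ∀ ε : ℝ, 0 < ε → ∃ δ : ℝ, 0 < δ ∧
    ∀ v : Ed d → Ed d, MemLp v 2 μ → L2norm μ v ≤ δ →
      ψ (μ.map (fun x => x + v x)) ≤ ψ μ + ((L2inner μ ζ v + ε * L2norm μ v : ℝ) : EReal)

lemma IsStrongSuperdiff.of_quadratic_bound {ψ : Measure (Ed d) → EReal} {μ : Measure (Ed d)}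
    {ζ : Ed d → Ed d} {C : ℝ} (hζ : MemLp ζ 2 μ) (hC : 0 ≤ C)
    (h : ∀ v : Ed d → Ed d, MemLp v 2 μ → ψ (μ.map (fun x => x + v x)) ≤
      ψ μ + ((L2inner μ ζ v + C * L2norm μ v ^ 2 : ℝ) : EReal)) :
    IsStrongSuperdiff ψ μ ζ := by
  refine ⟨hζ, fun ε hε => ⟨ε / (C + 1), by positivity, fun v hv hvδ => (h v hv).trans ?_⟩⟩
  have hv0 : 0 ≤ L2norm μ v := Real.sqrt_nonneg _
  have hCv : (C + 1) * L2norm μ v ≤ ε := (le_div_iff₀' (by positivity)).mp hvδ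
  gcongr ψ μ + ((L2inner μ ζ v + ?_ : ℝ) : EReal)
  nlinarith

lemma isStrongSuperdiff_W2sq {ρ p : Measure (Ed d)} {T : Ed d → Ed d} (hT : IsOTMap ρ p T)
    (hρ : HasFiniteSecondMoment ρ) (hp : HasFiniteSecondMoment p) {c : ℝ} (hc : 0 ≤ c) :
    IsStrongSuperdiff (fun μ => ((ENNReal.ofReal c * W2sq p μ : ℝ≥0∞) : EReal)) ρ
      (fun x => (2 * c) • (x - T x)) := by
  have hu := hT.memLp_id_sub hρ hp
  have hcoe : ∀ r, 0 ≤ r →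
      ((ENNReal.ofReal c * ENNReal.ofReal r : ℝ≥0∞) : EReal) = ((c * r : ℝ) : EReal) := by
    intro r hr
    rw [← ENNReal.ofReal_mul hc, EReal.coe_ennreal_ofReal, max_eq_left (mul_nonneg hc hr)]
  refine .of_quadratic_bound (by exact hu.const_smul (2 * c)) hc fun v hv => ?_
  have hbound : W2sq p (ρ.map fun x => x + v x) ≤
      ENNReal.ofReal (∫ x, ‖(x - T x) + v x‖ ^ 2 ∂ρ) :=
    (hT.W2sq_map_add_le hv.1.aemeasurable).trans_eq (hu.add hv).lintegral_nnnorm_sq_eq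
  calc ((ENNReal.ofReal c * W2sq p (ρ.map fun x => x + v x) : ℝ≥0∞) : EReal)
      ≤ ((ENNReal.ofReal c * ENNReal.ofReal (∫ x, ‖(x - T x) + v x‖ ^ 2 ∂ρ) : ℝ≥0∞) : EReal) :=
        EReal.coe_ennreal_le_coe_ennreal_iff.mpr (mul_le_mul_right hbound _)
    _ = ((c * ∫ x, ‖x - T x‖ ^ 2 ∂ρ : ℝ) : EReal) +
          ((L2inner ρ (fun x => (2 * c) • (x - T x)) v + c * L2norm ρ v ^ 2 : ℝ) : EReal) := by
        rw [hcoe _ (integral_nonneg fun _ => sq_nonneg _), ← EReal.coe_add,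
          integral_norm_add_sq hu hv, L2inner_smul_left, L2norm_sq, L2inner]
        congr 1
        ring
    _ = ((ENNReal.ofReal c * W2sq p ρ : ℝ≥0∞) : EReal) +
          ((L2inner ρ (fun x => (2 * c) • (x - T x)) v + c * L2norm ρ v ^ 2 : ℝ) : EReal) := by
        rw [W2sq_comm, hT.W2sq_eq hu, hcoe _ (integral_nonneg fun _ => sq_nonneg _)]

lemma IsStrongSubdiff.sub_of_isStrongSuperdiff {φ ψ : Measure (Ed d) → EReal}
    {μ : Measure (Ed d)} {ξ ζ : Ed d → Ed d} (hξ : IsStrongSubdiff (fun ν => φ ν + ψ ν) μ ξ)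
    (hζ : IsStrongSuperdiff ψ μ ζ) (hψ_top : ψ μ ≠ ⊤) (hψ_bot : ψ μ ≠ ⊥) :
    IsStrongSubdiff φ μ (fun x => ξ x - ζ x) := by
  obtain ⟨a, ha⟩ : ∃ a : ℝ, ψ μ = a := ⟨_, (EReal.coe_toReal hψ_top hψ_bot).symm⟩
  refine ⟨hξ.1.sub hζ.1, fun ε hε => ?_⟩
  obtain ⟨δ₁, hδ₁, h₁⟩ := hξ.2 (ε / 2) (half_pos hε)
  obtain ⟨δ₂, hδ₂, h₂⟩ := hζ.2 (ε / 2) (half_pos hε)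
  refine ⟨min δ₁ δ₂, lt_min hδ₁ hδ₂, fun v hv hvδ => ?_⟩
  have hsum := h₁ v hv (hvδ.trans (min_le_left _ _))
  have hsup := h₂ v hv (hvδ.trans (min_le_right _ _))
  beta_reduce at hsum
  rw [ha] at hsum hsup
  rw [L2inner_sub_left hξ.1 hζ.1 hv, ge_iff_le,
    ← (EReal.addLECancellable_coe (a + (L2inner μ ζ v + ε / 2 * L2norm μ v))).add_le_add_iff_right]
  calc _ = φ μ + a + ((L2inner μ ξ v - ε / 2 * L2norm μ v : ℝ) : EReal) := by
        rw [add_assoc, add_assoc, ← EReal.coe_add, ← EReal.coe_add]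
        congr 2
        ring
    _ ≤ φ (μ.map fun x => x + v x) + ψ (μ.map fun x => x + v x) := hsum
    _ ≤ _ := by
        rw [EReal.coe_add]
        exact add_le_add_right hsup _

end Subdifferential

theorem stmt_2_general {d : ℕ} (G : Measure (Ed d) → EReal)
    (γ : ℝ) (hγ : 0 < γ) (p : Measure (Ed d)) (hp : MemP2r p)
    (ρ : Measure (Ed d)) (hρ : MemP2r ρ)
    (Tρp : Ed d → Ed d) (hTρp : IsOTMap ρ p Tρp)
    (ξ : Ed d → Ed d) (hξ : IsStrongSubdiff (JKOfun G γ p) ρ ξ) :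
    IsStrongSubdiff G ρ (fun x => ξ x + γ⁻¹ • (Tρp x - x)) := by
  have hW2 := isStrongSuperdiff_W2sq hTρp hρ.1.2 hp.1.2 (c := 1 / (2 * γ)) (by positivity)
  have hW2_ne_top : W2sq p ρ ≠ ⊤ := by
    rw [W2sq_comm, hTρp.W2sq_eq (hTρp.memLp_id_sub hρ.1.2 hp.1.2)]
    exact ENNReal.ofReal_ne_top
  have hG := IsStrongSubdiff.sub_of_isStrongSuperdiff (φ := G) hξ hW2
    (EReal.coe_ennreal_eq_top_iff.not.mpr (ENNReal.mul_ne_top ENNReal.ofReal_ne_top hW2_ne_top))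
    (EReal.coe_ennreal_ne_bot _)
  have hcoef : 2 * (1 / (2 * γ)) = γ⁻¹ := by field_simp
  convert hG using 2 with x
  rw [hcoef, ← sub_neg_eq_add, ← smul_neg, neg_sub]

/-- If `ξ` is a strong Fréchet subdifferential at `ρ ∈ P₂ʳ` of
`F(·) = G(·) + W₂²(p, ·)/(2γ)`, where `G` is lower semi-continuous with `Dom(G) ⊂ P₂ʳ`,
then `ξ + (T_ρ^p - Id)/γ` is a strong Fréchet subdifferential of `G` at `ρ`. -/
theorem stmt_2 {d : ℕ} (G : Measure (Ed d) → EReal)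
    (hGlsc : LscOnP2 G) (hGdom : ∀ μ : Measure (Ed d), G μ ≠ ⊤ → MemP2r μ)
    (γ : ℝ) (hγ : 0 < γ) (p : Measure (Ed d)) (hp : MemP2r p)
    (ρ : Measure (Ed d)) (hρ : MemP2r ρ)
    (Tρp : Ed d → Ed d) (hTρp : IsOTMap ρ p Tρp)
    (ξ : Ed d → Ed d) (hξ : IsStrongSubdiff (JKOfun G γ p) ρ ξ) :
    IsStrongSubdiff G ρ (fun x => ξ x + γ⁻¹ • (Tρp x - x)) :=
  stmt_2_general G γ hγ p hp ρ hρ Tρp hTρp ξ hξ
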